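/- Algorithm find_all_paths (depth-first enumeration with pruning condition ι + δ_ĵ < λ − 1, where δ_ĵ is the minimum number of edges from ĵ to r) returns exactly the set of simple paths from the start node to r that use at most λ − 1 edges and avoid forbidden turns. -/

import Mathlib

/-- Lists whose consecutive elements are edges of the graph given by `adj`. -/
def AdjChain {V : Type} (adj : V → Finset V) (π : List V) : Prop :=
  List.Chain' (fun a b => b ∈ adj a) π

/-- The DFS path enumeration with pruning `ι + δ ĵ < λ - 1`, forbidden-turn sets `Γ`
and a fuel parameter for termination.  The current partial path is `π`, the current
node is `i`, and `ι` is the number of edges used so far. -/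
noncomputable def findAllPaths {V : Type} [DecidableEq V] (adj : V → Finset V) (r : V) (lam : ℕ)
    (δ : V → ℕ∞) (Γ : V → V → Finset V) : ℕ → ℕ → V → List V → List (List V)
  | 0, _, _, _ => []
  | fuel + 1, ι, i, π =>
    let π' := π ++ [i]
    if i = r then [π']
    else
      ((adj i).toList.map (fun j =>
        if j ∉ π' ∧ ((ι : ℕ∞) + δ j < ((lam - 1 : ℕ) : ℕ∞)) ∧
            (π.getLast?.all (fun p => decide (j ∉ Γ p i)) = true) then
          findAllPaths adj r lam δ Γ fuel (ι + 1) j π'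
        else [])).flatten

/-- A path is admissible if it is a simple path from `v` to `r` with at most
`λ - 1` edges, respecting adjacency and avoiding forbidden turns. -/
def AdmissiblePath {V : Type} (adj : V → Finset V) (r : V) (lam : ℕ)
    (Γ : V → V → Finset V) (v : V) (π : List V) : Prop :=
  π.head? = some v ∧ π.getLast? = some r ∧ π.Nodup ∧ AdjChain adj π ∧
  π.length - 1 ≤ lam - 1 ∧
  ∀ a b c : V, [a, b, c] <:+: π → c ∉ Γ a b

/-!
Call a list a partial path if it is simple, follows edges, has at most `λ - 1` edges and makes
no forbidden turn; this property is closed under prefixes. By induction on the fuel, the search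
at node `i` with current path `π` returns exactly the completions of `π ++ [i]`: the partial paths
ending at `r` that extend it. A completion through the successor `j` has at least `ι + 1 + δ j`
edges, so the pruning test discards only successors through which there is no completion, and
the other two tests are conditions every completion satisfies anyway.
-/

theorem List.triple_suffix_append_pair_iff {α : Type*} {π : List α} {a b c i j : α} :
    [a, b, c] <:+ π ++ [i, j] ↔ π.getLast? = some a ∧ b = i ∧ c = j := by
  rw [← List.reverse_prefix, ← List.singleton_suffix_iff_getLast?_eq_some, ← List.reverse_prefix]
  simp only [List.reverse_cons, List.reverse_nil, List.nil_append, List.cons_append,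
    List.reverse_append, List.cons_prefix_cons]
  tauto

theorem List.triple_infix_concat_concat_iff {α : Type*} {π : List α} {a b c i j : α} :
    [a, b, c] <:+: π ++ [i] ++ [j] ↔
      [a, b, c] <:+: π ++ [i] ∨ (π.getLast? = some a ∧ b = i ∧ c = j) := by
  rw [List.infix_concat_iff, List.append_assoc, List.singleton_append,
    List.triple_suffix_append_pair_iff, or_comm]

theorem List.eq_of_prefix_of_getLast?_eq {α : Type*} {p σ : List α} (h : p <+: σ)
    (hσ : σ.Nodup) (hlast : σ.getLast? = p.getLast?) : σ = p := by
  obtain ⟨τ, rfl⟩ := h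
  cases hτ : τ.getLast? with
  | none => simp_all
  | some x =>
    rw [List.getLast?_append, hτ, Option.some_or] at hlast
    exact absurd rfl ((List.nodup_append.mp hσ).2.2 x (List.mem_of_getLast? hlast.symm) x
      (List.mem_of_getLast? hτ))

section PartialPaths

variable {V : Type} {adj : V → Finset V} {r : V} {lam : ℕ} {Γ : V → V → Finset V}

def IsPartialPath (adj : V → Finset V) (lam : ℕ) (Γ : V → V → Finset V) (π : List V) : Prop :=
  π.Nodup ∧ AdjChain adj π ∧ π.length - 1 ≤ lam - 1 ∧ ∀ a b c : V, [a, b, c] <:+: π → c ∉ Γ a b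

def IsCompletion (adj : V → Finset V) (r : V) (lam : ℕ) (Γ : V → V → Finset V)
    (p σ : List V) : Prop :=
  p <+: σ ∧ σ.getLast? = some r ∧ IsPartialPath adj lam Γ σ

theorem IsPartialPath.of_prefix {π σ : List V} (hσ : IsPartialPath adj lam Γ σ) (h : π <+: σ) :
    IsPartialPath adj lam Γ π :=
  ⟨hσ.1.sublist h.sublist, List.IsChain.prefix hσ.2.1 h,
    (Nat.sub_le_sub_right h.length_le 1).trans hσ.2.2.1,
    fun a b c habc => hσ.2.2.2 a b c (habc.trans h.isInfix)⟩

theorem isPartialPath_singleton (v : V) : IsPartialPath adj lam Γ [v] :=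
  ⟨List.nodup_singleton v, List.isChain_singleton v, by simp,
    fun _ _ _ h => absurd h.length_le (by simp)⟩

theorem isPartialPath_concat_iff [DecidableEq V] {π : List V} {i j : V}
    (hπ : IsPartialPath adj lam Γ (π ++ [i])) :
    IsPartialPath adj lam Γ (π ++ [i] ++ [j]) ↔
      j ∈ adj i ∧ j ∉ π ++ [i] ∧ π.length < lam - 1 ∧
        π.getLast?.all (fun p => decide (j ∉ Γ p i)) = true := by
  obtain ⟨hnodup, hchain, -, hturn⟩ := hπ
  have hnodup_iff : (π ++ [i] ++ [j]).Nodup ↔ j ∉ π ++ [i] := by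
    rw [← List.concat_eq_append, List.nodup_concat]
    exact and_iff_left hnodup
  have hchain_iff : AdjChain adj (π ++ [i] ++ [j]) ↔ j ∈ adj i := by
    have hchain' : List.IsChain (fun a b => b ∈ adj a) (π ++ [i]) := hchain
    change List.IsChain _ _ ↔ _
    rw [List.isChain_append]
    exact ⟨fun h => h.2.2 i (by simp) j rfl,
      fun h => ⟨hchain', List.isChain_singleton j, by simpa using h⟩⟩
  have hturn_iff : (∀ a b c, [a, b, c] <:+: π ++ [i] ++ [j] → c ∉ Γ a b) ↔
      π.getLast?.all (fun p => decide (j ∉ Γ p i)) = true := by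
    simp only [List.triple_infix_concat_concat_iff, Option.all_eq_true, decide_eq_true_eq]
    constructor
    · intro h p hp
      exact h p i j (Or.inr ⟨hp, rfl, rfl⟩)
    · rintro h a b c (habc | ⟨ha, rfl, rfl⟩)
      exacts [hturn a b c habc, h a ha]
  simp only [IsPartialPath, hnodup_iff, hchain_iff, hturn_iff, List.length_append,
    List.length_singleton]
  constructor
  · rintro ⟨hj, hadj, hlen, hΓ⟩
    exact ⟨hadj, hj, by omega, hΓ⟩
  · rintro ⟨hadj, hj, hlen, hΓ⟩
    exact ⟨hj, hadj, by omega, hΓ⟩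

theorem admissiblePath_iff_isCompletion_singleton {v : V} {σ : List V} :
    AdmissiblePath adj r lam Γ v σ ↔ IsCompletion adj r lam Γ [v] σ := by
  rw [IsCompletion, List.singleton_prefix_iff_head?_eq_some]
  rfl

theorem isCompletion_concat_target_iff {π : List V}
    (hπ : IsPartialPath adj lam Γ (π ++ [r])) (σ : List V) :
    IsCompletion adj r lam Γ (π ++ [r]) σ ↔ σ = π ++ [r] := by
  constructor
  · rintro ⟨hprefix, hlast, hσ⟩
    exact List.eq_of_prefix_of_getLast?_eq hprefix hσ.1 (by simpa using hlast)
  · rintro rfl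
    exact ⟨List.prefix_refl _, by simp, hπ⟩

theorem isCompletion_iff_exists_step [DecidableEq V] {δ : V → ℕ∞}
    (hδ : ∀ j τ, AdjChain adj (j :: τ) → (j :: τ).getLast? = some r → δ j ≤ τ.length)
    {π σ : List V} {i : V} (hπ : IsPartialPath adj lam Γ (π ++ [i])) (hir : i ≠ r) :
    IsCompletion adj r lam Γ (π ++ [i]) σ ↔
      ∃ j ∈ adj i, (j ∉ π ++ [i] ∧ (π.length : ℕ∞) + δ j < ((lam - 1 : ℕ) : ℕ∞) ∧
          π.getLast?.all (fun p => decide (j ∉ Γ p i)) = true) ∧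
        IsCompletion adj r lam Γ (π ++ [i] ++ [j]) σ := by
  constructor
  · rintro ⟨⟨τ, rfl⟩, hlast, hσ⟩
    obtain _ | ⟨j, τ⟩ := τ
    · exact absurd (by simpa using hlast) hir
    have hprefix : π ++ [i] ++ [j] <+: π ++ [i] ++ j :: τ := by simp
    obtain ⟨hadj, hj, -, hΓ⟩ := (isPartialPath_concat_iff hπ).mp (hσ.of_prefix hprefix)
    have hδj : δ j ≤ τ.length :=
      hδ j τ (hσ.2.1.infix List.infix_append_right) (by simpa using hlast)
    have hlen : π.length + τ.length < lam - 1 := by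
      have := hσ.2.2.1
      simp only [List.length_append, List.length_cons] at this
      omega
    refine ⟨j, hadj, ⟨hj, ?_, hΓ⟩, hprefix, hlast, hσ⟩
    calc (π.length : ℕ∞) + δ j ≤ π.length + τ.length := by gcongr
      _ < ((lam - 1 : ℕ) : ℕ∞) := by exact_mod_cast hlen
  · rintro ⟨j, -, -, hprefix, hlast, hσ⟩
    exact ⟨(List.prefix_append _ _).trans hprefix, hlast, hσ⟩

theorem mem_findAllPaths_iff [DecidableEq V] {δ : V → ℕ∞}
    (hδ : ∀ j τ, AdjChain adj (j :: τ) → (j :: τ).getLast? = some r → δ j ≤ τ.length) :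
    ∀ (fuel ι : ℕ) (i : V) (π σ : List V), π.length = ι → lam - 1 < ι + fuel →
      IsPartialPath adj lam Γ (π ++ [i]) →
      (σ ∈ findAllPaths adj r lam δ Γ fuel ι i π ↔ IsCompletion adj r lam Γ (π ++ [i]) σ)
  | 0, ι, i, π, σ, hι, hfuel, hπ => by
    have := hπ.2.2.1
    simp only [List.length_append, List.length_singleton] at this
    omega
  | fuel + 1, _, i, π, σ, rfl, hfuel, hπ => by
    rw [findAllPaths]
    by_cases hir : i = r
    · subst hir
      rw [if_pos rfl, List.mem_singleton, isCompletion_concat_target_iff hπ]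
    · rw [if_neg hir, isCompletion_iff_exists_step hδ hπ hir]
      simp only [List.mem_flatten, List.mem_map, Finset.mem_toList, exists_exists_and_eq_and,
        List.mem_ite_nil_right]
      refine exists_congr fun j => and_congr_right fun hadj => and_congr_right fun hj => ?_
      have hlen : π.length < lam - 1 := by
        have : (π.length : ℕ∞) < ((lam - 1 : ℕ) : ℕ∞) := le_self_add.trans_lt hj.2.1
        exact_mod_cast this
      exact mem_findAllPaths_iff hδ fuel _ j (π ++ [i]) σ (by simp) (by omega)
        ((isPartialPath_concat_iff hπ).mpr ⟨hadj, hj.1, hlen, hj.2.2⟩)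

end PartialPaths

/-- The DFS with shortest-distance pruning returns exactly the admissible paths,
provided `δ i` is the minimum number of edges of a directed path from `i` to `r`. -/
theorem findAllPaths_correct {V : Type} [DecidableEq V]
    (adj : V → Finset V) (r : V) (lam : ℕ) (δ : V → ℕ∞) (Γ : V → V → Finset V)
    (hδ : ∀ i : V, δ i = sInf {n : ℕ∞ | ∃ π : List V, AdjChain adj π ∧
      π.head? = some i ∧ π.getLast? = some r ∧ ((π.length - 1 : ℕ) : ℕ∞) = n})
    (v : V) :
    ∀ π : List V,
      π ∈ findAllPaths adj r lam δ Γ (lam + 1) 0 v [] ↔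
        AdmissiblePath adj r lam Γ v π := by
  have hδ_le : ∀ j τ, AdjChain adj (j :: τ) → (j :: τ).getLast? = some r → δ j ≤ τ.length :=
    fun j τ hchain hlast => (hδ j).symm ▸ sInf_le ⟨j :: τ, hchain, rfl, hlast, by simp⟩
  intro π
  rw [admissiblePath_iff_isCompletion_singleton]
  exact mem_findAllPaths_iff hδ_le (lam + 1) 0 v [] π rfl (by omega) (isPartialPath_singleton v)
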